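/- Let L be a linear subspace of R^n that satisfies α√n‖w‖₂ ≤ ‖w‖₁ for all w ∈ L, where α ∈ (0,1]. Let K ⊆ {1,...,n} with |K| = k, and suppose k/n < α²/4 (equivalently, 2√(k/n) < α). Then every nonzero w ∈ L satisfies ‖w_K‖₁ < ‖w_{K̄}‖₁ (i.e., the balancedness condition holds with C = 1 strictly). -/

import Mathlib

open Finset
noncomputable section
open scoped Classical

def l1 {n : ℕ} (w : Fin n → ℝ) : ℝ := ∑ i, |w i|
def l2 {n : ℕ} (w : Fin n → ℝ) : ℝ := Real.sqrt (∑ i, (w i)^2)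
def restr {n : ℕ} (w : Fin n → ℝ) (K : Finset (Fin n)) : Fin n → ℝ := fun i => if i ∈ K then w i else 0
def l0 {n : ℕ} (w : Fin n → ℝ) : ℕ := (Finset.univ.filter (fun i => w i ≠ 0)).card

/-!
On the support set `K`, Cauchy–Schwarz gives `‖w_K‖₁ ≤ √k ‖w‖₂`, and the hypothesis on `L` gives
`√n α ‖w‖₂ ≤ ‖w‖₁`; as `2√k < α√n`, this yields `2 ‖w_K‖₁ < ‖w‖₁ = ‖w_K‖₁ + ‖w_{K̄}‖₁`.
-/

section Norms

variable {n : ℕ} (w : Fin n → ℝ) (K : Finset (Fin n))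

lemma l1_nonneg : 0 ≤ l1 w :=
  Finset.sum_nonneg fun i _ => abs_nonneg (w i)

lemma l2_sq : l2 w ^ 2 = ∑ i, w i ^ 2 :=
  Real.sq_sqrt (Finset.sum_nonneg fun i _ => sq_nonneg (w i))

lemma l2_pos {w : Fin n → ℝ} (hw : w ≠ 0) : 0 < l2 w := by
  obtain ⟨i, hi⟩ := Function.ne_iff.mp hw
  exact Real.sqrt_pos.mpr <|
    Finset.sum_pos' (fun j _ => sq_nonneg (w j)) ⟨i, Finset.mem_univ i, sq_pos_of_ne_zero hi⟩

lemma l1_restr : l1 (restr w K) = ∑ i ∈ K, |w i| := by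
  simp only [l1, restr, apply_ite abs, abs_zero, Finset.sum_ite_mem, Finset.univ_inter]

lemma l1_restr_add_l1_restr_compl : l1 (restr w K) + l1 (restr w Kᶜ) = l1 w := by
  rw [l1_restr, l1_restr, Finset.sum_add_sum_compl, l1]

lemma l1_restr_sq_le_card_mul_l2_sq : l1 (restr w K) ^ 2 ≤ K.card * l2 w ^ 2 := by
  have hsub : ∑ i ∈ K, |w i| ^ 2 ≤ ∑ i, w i ^ 2 := by
    simp only [sq_abs]
    exact Finset.sum_le_sum_of_subset_of_nonneg (Finset.subset_univ K)
      fun i _ _ => sq_nonneg (w i)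
  calc l1 (restr w K) ^ 2 = (∑ i ∈ K, |w i|) ^ 2 := by rw [l1_restr]
    _ ≤ K.card * ∑ i ∈ K, |w i| ^ 2 := sq_sum_le_card_mul_sum_sq
    _ ≤ K.card * l2 w ^ 2 := by rw [l2_sq]; gcongr

end Norms

lemma sq_mul_l2_sq_le_l1_sq {n : ℕ} {w : Fin n → ℝ} {α : ℝ} (hα : 0 ≤ α)
    (h : α * Real.sqrt n * l2 w ≤ l1 w) : α ^ 2 * n * l2 w ^ 2 ≤ l1 w ^ 2 := by
  have hl2 : 0 ≤ l2 w := Real.sqrt_nonneg _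
  calc α ^ 2 * n * l2 w ^ 2 = (α * Real.sqrt n * l2 w) ^ 2 := by
        rw [mul_pow, mul_pow, Real.sq_sqrt (Nat.cast_nonneg n)]
    _ ≤ l1 w ^ 2 := by gcongr

lemma two_mul_l1_restr_lt_l1 {n : ℕ} {w : Fin n → ℝ} (hw : w ≠ 0) (K : Finset (Fin n))
    {α : ℝ} (hα : 0 ≤ α) (h : α * Real.sqrt n * l2 w ≤ l1 w) (hK : 4 * K.card < α ^ 2 * n) :
    2 * l1 (restr w K) < l1 w := by
  have hl2 : 0 < l2 w ^ 2 := pow_pos (l2_pos hw) 2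
  have hsq : (2 * l1 (restr w K)) ^ 2 < l1 w ^ 2 :=
    calc (2 * l1 (restr w K)) ^ 2 ≤ 4 * K.card * l2 w ^ 2 := by
          nlinarith [l1_restr_sq_le_card_mul_l2_sq w K]
      _ < α ^ 2 * n * l2 w ^ 2 := by gcongr
      _ ≤ l1 w ^ 2 := sq_mul_l2_sq_le_l1_sq hα h
  exact lt_of_pow_lt_pow_left₀ 2 (l1_nonneg w) hsq

theorem stmt17_general {n : ℕ} (L : Submodule ℝ (Fin n → ℝ)) (α : ℝ) (K : Finset (Fin n)) (k : ℕ)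
    (hα0 : 0 < α)
    (hAE : ∀ w ∈ L, α * Real.sqrt n * l2 w ≤ l1 w)
    (hK : K.card = k) (hkn : (k : ℝ) / n < α ^ 2 / 4) :
    ∀ w ∈ L, w ≠ 0 → l1 (restr w K) < l1 (restr w Kᶜ) := by
  intro w hw hw0
  have hn : (0 : ℝ) < n := by
    have : n ≠ 0 := by rintro rfl; exact hw0 (Subsingleton.elim _ _)
    positivity
  have hcard : 4 * (K.card : ℝ) < α ^ 2 * n := by
    rw [hK]
    rw [div_lt_div_iff₀ hn four_pos] at hkn
    linarith
  have hhalf := two_mul_l1_restr_lt_l1 hw0 K hα0.le (hAE w hw) hcard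
  linarith [l1_restr_add_l1_restr_compl w K]

theorem stmt17 {n : ℕ} (L : Submodule ℝ (Fin n → ℝ)) (α : ℝ) (K : Finset (Fin n)) (k : ℕ)
    (hα0 : 0 < α) (hα1 : α ≤ 1)
    (hAE : ∀ w ∈ L, α * Real.sqrt n * l2 w ≤ l1 w)
    (hK : K.card = k) (hkn : (k : ℝ) / n < α ^ 2 / 4) :
    ∀ w ∈ L, w ≠ 0 → l1 (restr w K) < l1 (restr w Kᶜ) :=
  stmt17_general L α K k hα0 hAE hK hkn
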